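/- Let V be a real symmetric positive semidefinite matrix with unit diagonal, indexed by a finite set I_B. Then for any real matrix G indexed by I_A × I_B, the quantity ∑_{x ∈ I_A} √(∑_{s,y ∈ I_B} G_{xs} G_{xy} V_{sy}) is at most the optimal vector bias β*(G) := sup over dimensions d and unit vectors {u_x}, {v_y} ⊆ ℝ^d of ∑_{x,y} G_{xy} ⟨u_x, v_y⟩. -/

import Mathlib

/-!
Write `V` as the Gram matrix of vectors `v y`, which are unit vectors because `V` has unit
diagonal. The `x`-th summand on the left is then the length of `w x = ∑ y, G x y • v y`, which is
`⟪u x, w x⟫` for a unit vector `u x` pointing along `w x`; so the left side is the bias of the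
strategy `(u, v)`. The biases are bounded by `∑ x, ∑ y, |G x y|`, so the supremum is a genuine
one and dominates this bias.
-/

open scoped InnerProductSpace

open scoped ComplexOrder in
theorem Matrix.PosSemidef.exists_eq_gram {𝕜 ι : Type*} [RCLike 𝕜] [Fintype ι] [DecidableEq ι]
    {V : Matrix ι ι 𝕜} (hV : V.PosSemidef) :
    ∃ v : ι → EuclideanSpace 𝕜 ι, Matrix.gram 𝕜 v = V := by
  open scoped MatrixOrder Matrix.Norms.L2Operator in
  obtain ⟨B, rfl⟩ := CStarAlgebra.nonneg_iff_eq_star_mul_self.mp hV.nonneg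
  refine ⟨fun j ↦ WithLp.toLp 2 (fun i ↦ B i j), Matrix.ext fun i j ↦ ?_⟩
  simp [Matrix.gram_apply, EuclideanSpace.inner_eq_star_dotProduct, Matrix.mul_apply,
    dotProduct, mul_comm]

section RealInnerProductSpace

variable {E : Type*} [NormedAddCommGroup E] [InnerProductSpace ℝ E]

theorem exists_norm_eq_one_real_inner_eq_norm [Nontrivial E] (w : E) :
    ∃ u : E, ‖u‖ = 1 ∧ ⟪u, w⟫_ℝ = ‖w‖ := by
  rcases eq_or_ne w 0 with rfl | hw
  · obtain ⟨u, hu⟩ := exists_norm_eq E zero_le_one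
    exact ⟨u, hu, by simp⟩
  · refine ⟨‖w‖⁻¹ • w, by simp [norm_smul, hw], ?_⟩
    rw [real_inner_smul_left, real_inner_self_eq_norm_sq, sq,
      inv_mul_cancel_left₀ (norm_ne_zero_iff.mpr hw)]

theorem norm_sum_smul_sq {ι : Type*} (s : Finset ι) (c : ι → ℝ) (v : ι → E) :
    ‖∑ i ∈ s, c i • v i‖ ^ 2 = ∑ i ∈ s, ∑ j ∈ s, c i * c j * ⟪v i, v j⟫_ℝ := by
  rw [← real_inner_self_eq_norm_sq]
  simp_rw [sum_inner, inner_sum, real_inner_smul_left, real_inner_smul_right, mul_assoc]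

end RealInnerProductSpace

section VectorBias

variable {IA IB : Type*} [Fintype IA] [Fintype IB]

def vectorBiases (G : IA → IB → ℝ) : Set ℝ :=
  {b : ℝ |
    ∃ (d : ℕ) (u : IA → EuclideanSpace ℝ (Fin d)) (v : IB → EuclideanSpace ℝ (Fin d)),
      (∀ x, ‖u x‖ = 1) ∧ (∀ y, ‖v y‖ = 1) ∧
      b = ∑ x, ∑ y, G x y * ⟪u x, v y⟫_ℝ}

theorem bddAbove_vectorBiases (G : IA → IB → ℝ) : BddAbove (vectorBiases G) := by
  refine ⟨∑ x, ∑ y, |G x y|, ?_⟩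
  rintro b ⟨d, u, v, hu, hv, rfl⟩
  gcongr with x _ y _
  calc G x y * ⟪u x, v y⟫_ℝ ≤ |G x y| * |⟪u x, v y⟫_ℝ| := (le_abs_self _).trans (abs_mul _ _).le
    _ ≤ |G x y| * (‖u x‖ * ‖v y‖) := by gcongr; exact abs_real_inner_le_norm _ _
    _ = |G x y| := by rw [hu, hv, mul_one, mul_one]

theorem mem_vectorBiases {E : Type*} [NormedAddCommGroup E] [InnerProductSpace ℝ E]
    [FiniteDimensional ℝ E] (G : IA → IB → ℝ) {u : IA → E} {v : IB → E}
    (hu : ∀ x, ‖u x‖ = 1) (hv : ∀ y, ‖v y‖ = 1) :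
    ∑ x, ∑ y, G x y * ⟪u x, v y⟫_ℝ ∈ vectorBiases G := by
  let e := (stdOrthonormalBasis ℝ E).repr
  refine ⟨_, e ∘ u, e ∘ v, by simp [hu], by simp [hv], ?_⟩
  simp [e, LinearIsometryEquiv.inner_map_map]

end VectorBias

theorem stmt1_general {IA IB : Type*} [Fintype IA] [Fintype IB] [Nonempty IB]
    (G : IA → IB → ℝ) (V : Matrix IB IB ℝ) (hV : V.PosSemidef)
    (hdiag : ∀ y, V y y = 1) :
    ∑ x, Real.sqrt (∑ s, ∑ y, G x s * G x y * V s y) ≤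
      sSup {b : ℝ |
        ∃ (d : ℕ) (u : IA → EuclideanSpace ℝ (Fin d)) (v : IB → EuclideanSpace ℝ (Fin d)),
          (∀ x, ‖u x‖ = 1) ∧ (∀ y, ‖v y‖ = 1) ∧
          b = ∑ x, ∑ y, G x y * ⟪u x, v y⟫_ℝ} := by
  classical
  obtain ⟨v, rfl⟩ := hV.exists_eq_gram
  have hv (y : IB) : ‖v y‖ = 1 := by
    rw [← pow_eq_one_iff_of_nonneg (norm_nonneg _) two_ne_zero, ← real_inner_self_eq_norm_sq,
      ← hdiag y, Matrix.gram_apply]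
  choose u hu huv using fun x ↦ exists_norm_eq_one_real_inner_eq_norm (∑ y, G x y • v y)
  change _ ≤ sSup (vectorBiases G)
  refine le_csSup (bddAbove_vectorBiases G) ?_
  convert mem_vectorBiases G hu hv using 1
  refine Finset.sum_congr rfl fun x _ ↦ ?_
  calc √(∑ s, ∑ y, G x s * G x y * Matrix.gram ℝ v s y)
      = ‖∑ y, G x y • v y‖ := by
        rw [← Real.sqrt_sq (norm_nonneg _), norm_sum_smul_sq]; rfl
    _ = ∑ y, G x y * ⟪u x, v y⟫_ℝ := by
        rw [← huv x, inner_sum]; simp only [real_inner_smul_right]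

/-- the square-root quantity is at most the optimal vector bias. -/
theorem stmt1 {IA IB : Type*} [Fintype IA] [Fintype IB] [Nonempty IA] [Nonempty IB]
    (G : IA → IB → ℝ) (V : Matrix IB IB ℝ) (hV : V.PosSemidef)
    (hdiag : ∀ y, V y y = 1) :
    ∑ x, Real.sqrt (∑ s, ∑ y, G x s * G x y * V s y) ≤
      sSup {b : ℝ |
        ∃ (d : ℕ) (u : IA → EuclideanSpace ℝ (Fin d)) (v : IB → EuclideanSpace ℝ (Fin d)),
          (∀ x, ‖u x‖ = 1) ∧ (∀ y, ‖v y‖ = 1) ∧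
          b = ∑ x, ∑ y, G x y * ⟪u x, v y⟫_ℝ} :=
  stmt1_general G V hV hdiag
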